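/- arXiv:1801.03200 — 3 statements merged into one kernel-verified Lean document; each statement's English description precedes it below -/
import Mathlib

section
/- Let nmExt : {0,1}^n × {0,1}^d → {0,1} be a (k,ε)-non-malleable extractor, let X = {x_1,…,x_K} ⊆ {0,1}^n be any subset of size K = 2^k, and for each seed s ∈ {0,1}^d let w^{(s)} = (nmExt(x_i,s))_{i∈[K]} ∈ {0,1}^K be the evaluation vector of s. Then there exists a subset S ⊆ {0,1}^d of size 2^{d−1} such that for every two distinct s, s' ∈ S it holds that dist(w^{(s)}, w^{(s')}) ≥ 1/2 − 2ε. -/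
open Finset

/-- Total variation distance between two distributions on a finite type,
defined as the supremum over events of the difference of probabilities. -/
noncomputable def tvDist {Ω : Type*} [Fintype Ω] (p q : Ω → ℝ) : ℝ :=
  ⨆ S : Finset Ω, |∑ ω ∈ S, p ω - ∑ ω ∈ S, q ω|

/-- Distribution of `f a` when `a` is drawn uniformly from the finite set `A`. -/
noncomputable def unifPush {α Ω : Type*} [DecidableEq Ω] (A : Finset α) (f : α → Ω) :
    Ω → ℝ :=
  fun ω => ((A.filter fun a => f a = ω).card : ℝ) / (A.card : ℝ)

/-- An adversarial function: a map on seeds with no fixed points. -/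
def Adversarial {d : ℕ} (A : (Fin d → Bool) → (Fin d → Bool)) : Prop :=
  ∀ s, A s ≠ s

/-- Distribution of the tuple `(nmExt(X,U_d), nmExt(X,A(U_d)), U_d)` for `X` uniform
on the finset `X` and `U_d` an independent uniform seed. -/
noncomputable def realDist {n d : ℕ} (nmExt : (Fin n → Bool) → (Fin d → Bool) → Bool)
    (X : Finset (Fin n → Bool)) (A : (Fin d → Bool) → (Fin d → Bool)) :
    Bool × Bool × (Fin d → Bool) → ℝ :=
  unifPush (X ×ˢ (Finset.univ : Finset (Fin d → Bool)))
    (fun p => (nmExt p.1 p.2, nmExt p.1 (A p.2), p.2))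

/-- Distribution of the tuple `(U_1, nmExt(X,A(U_d)), U_d)`, with `U_1` a uniform bit
independent of `X` and `U_d`. -/
noncomputable def idealDist {n d : ℕ} (nmExt : (Fin n → Bool) → (Fin d → Bool) → Bool)
    (X : Finset (Fin n → Bool)) (A : (Fin d → Bool) → (Fin d → Bool)) :
    Bool × Bool × (Fin d → Bool) → ℝ :=
  unifPush ((Finset.univ : Finset Bool) ×ˢ X ×ˢ (Finset.univ : Finset (Fin d → Bool)))
    (fun p => (p.1, nmExt p.2.1 (A p.2.2), p.2.2))

/-- `nmExt` is a `(k,ε)`-non-malleable extractor: for every flat `(n,k)`-source `X`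
and every adversarial function `A`, the real and ideal distributions are `ε`-close
in total variation distance. -/
def IsNonMalleableExtractor (n k d : ℕ) (ε : ℝ)
    (nmExt : (Fin n → Bool) → (Fin d → Bool) → Bool) : Prop :=
  ∀ X : Finset (Fin n → Bool), X.card = 2 ^ k →
    ∀ A : (Fin d → Bool) → (Fin d → Bool), Adversarial A →
      tvDist (realDist nmExt X A) (idealDist nmExt X A) ≤ ε

/-! Call a seed `s` correlated if some other seed `t` has an evaluation vector agreeing with
`w⁽ˢ⁾` on more than a `1/2 + 2ε` fraction of the source, and let `B` be the set of correlated
seeds. If `|B| > 2^{d-1}`, the adversary sending each `s ∈ B` to such a partner (and every other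
seed anywhere else) is caught by the test "the seed lies in `B` and the two output bits agree":
its probability exceeds `|B| (1/2 + 2ε) / 2^d` under the real distribution but is exactly
`|B| / 2^{d+1}` under the ideal one, a gap larger than `ε`. Hence `|B| ≤ 2^{d-1}`, and any
`2^{d-1}` seeds outside `B` are pairwise far. -/

lemma sum_unifPush {α Ω : Type*} [DecidableEq Ω] (D : Finset α) (f : α → Ω) (E : Finset Ω) :
    ∑ ω ∈ E, unifPush D f ω = (#{a ∈ D | f a ∈ E} : ℝ) / #D := by
  simp only [unifPush, ← sum_div, ← Nat.cast_sum, sum_card_fiberwise_eq_card_filter]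

lemma abs_sum_sub_le_tvDist {Ω : Type*} [Fintype Ω] (p q : Ω → ℝ) (E : Finset Ω) :
    |∑ ω ∈ E, p ω - ∑ ω ∈ E, q ω| ≤ tvDist p q :=
  le_ciSup (f := fun S : Finset Ω => |∑ ω ∈ S, p ω - ∑ ω ∈ S, q ω|)
    (Set.finite_range _).bddAbove E

lemma tvDist_nonneg {Ω : Type*} [Fintype Ω] (p q : Ω → ℝ) : 0 ≤ tvDist p q := by
  simpa using abs_sum_sub_le_tvDist p q ∅

lemma card_filter_eq_add_hammingDist {ι β : Type*} [Fintype ι] [DecidableEq β] (f g : ι → β) :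
    #{i | f i = g i} + hammingDist f g = Fintype.card ι :=
  card_filter_add_card_filter_not _

lemma exists_forall_ne_self_and_rel {α : Type*} [Nontrivial α] (R : α → α → Prop)
    (hR : ∀ s t, R s t → t ≠ s) :
    ∃ A : α → α, ∀ s, A s ≠ s ∧ ((∃ t, R s t) → R s (A s)) := by
  have : ∀ s, ∃ t, t ≠ s ∧ ((∃ t, R s t) → R s t) := fun s => by
    by_cases h : ∃ t, R s t
    · obtain ⟨t, ht⟩ := h
      exact ⟨t, hR s t ht, fun _ => ht⟩
    · obtain ⟨t, ht⟩ := exists_ne s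
      exact ⟨t, ht, fun h' => (h h').elim⟩
  choose A hA using this
  exact ⟨A, hA⟩

section Agreement

variable {n d : ℕ} (nmExt : (Fin n → Bool) → (Fin d → Bool) → Bool) (X : Finset (Fin n → Bool))

noncomputable def agreement (s t : Fin d → Bool) : ℝ :=
  (#{a ∈ X | nmExt a s = nmExt a t} : ℝ) / #X

def agreeEvent (B : Finset (Fin d → Bool)) : Finset (Bool × Bool × (Fin d → Bool)) :=
  {p | p.2.2 ∈ B ∧ p.1 = p.2.1}

lemma sum_realDist_agreeEvent (A : (Fin d → Bool) → (Fin d → Bool)) (B : Finset (Fin d → Bool)) :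
    ∑ ω ∈ agreeEvent B, realDist nmExt X A ω = (∑ s ∈ B, agreement nmExt X s (A s)) / 2 ^ d := by
  have hcount : #{p ∈ X ×ˢ univ | (nmExt p.1 p.2, nmExt p.1 (A p.2), p.2) ∈ agreeEvent B}
      = ∑ s ∈ B, #{a ∈ X | nmExt a s = nmExt a (A s)} := by
    simp only [agreeEvent, mem_filter, mem_univ, true_and, card_filter, sum_product_right, ite_and,
      sum_ite_irrel, sum_const_zero, sum_ite_mem, univ_inter]
  rw [realDist, sum_unifPush, hcount, card_product, card_univ]
  simp [agreement, ← sum_div, div_div, mul_comm]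

lemma sum_idealDist_agreeEvent (hX : X.Nonempty) (A : (Fin d → Bool) → (Fin d → Bool))
    (B : Finset (Fin d → Bool)) :
    ∑ ω ∈ agreeEvent B, idealDist nmExt X A ω = #B / 2 / 2 ^ d := by
  have hcount : #{p ∈ univ ×ˢ X ×ˢ univ | (p.1, nmExt p.2.1 (A p.2.2), p.2.2) ∈ agreeEvent B}
      = #B * #X := by
    rw [card_filter, sum_product_right, sum_product_right]
    simp only [agreeEvent, mem_filter, mem_univ, true_and, ite_and, sum_ite_irrel, sum_const_zero,
      sum_ite_eq', if_true, sum_ite_mem, univ_inter, sum_const, smul_eq_mul, mul_one]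
  rw [idealDist, sum_unifPush, hcount, card_product, card_product, card_univ, card_univ]
  have : (#X : ℝ) ≠ 0 := by exact_mod_cast hX.card_ne_zero
  simp only [Nat.cast_mul, Fintype.card_bool, Fintype.card_pi, prod_const, card_univ,
    Fintype.card_fin, Nat.cast_ofNat, Nat.cast_pow]
  field_simp

lemma agreement_map {ι : Type*} [Fintype ι] [Nonempty ι] (x : ι ↪ (Fin n → Bool))
    (s t : Fin d → Bool) :
    agreement nmExt (univ.map x) s t =
      1 - (hammingDist (fun i => nmExt (x i) s) (fun i => nmExt (x i) t) : ℝ) / Fintype.card ι := by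
  have hcard := card_filter_eq_add_hammingDist (fun i => nmExt (x i) s) (fun i => nmExt (x i) t)
  have : (Fintype.card ι : ℝ) ≠ 0 := by positivity
  simp only [agreement, filter_map, card_map, card_univ, Function.comp_def]
  rw [← hcard] at this ⊢
  field_simp
  push_cast
  ring

open Classical in
noncomputable def correlatedSeeds (δ : ℝ) : Finset (Fin d → Bool) :=
  {s | ∃ t ≠ s, δ < agreement nmExt X s t}

lemma mem_correlatedSeeds {δ : ℝ} {s : Fin d → Bool} :
    s ∈ correlatedSeeds nmExt X δ ↔ ∃ t ≠ s, δ < agreement nmExt X s t := by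
  simp [correlatedSeeds]

end Agreement

namespace IsNonMalleableExtractor

variable {n k d : ℕ} {ε : ℝ} {nmExt : (Fin n → Bool) → (Fin d → Bool) → Bool}
  (hnm : IsNonMalleableExtractor n k d ε nmExt) {X : Finset (Fin n → Bool)} (hX : #X = 2 ^ k)
include hnm hX

lemma sum_agreement_sub_le {A : (Fin d → Bool) → (Fin d → Bool)} (hA : Adversarial A)
    (B : Finset (Fin d → Bool)) :
    (∑ s ∈ B, agreement nmExt X s (A s) - #B / 2) / 2 ^ d ≤ ε := by
  have hXne : X.Nonempty := by
    rw [← card_pos, hX]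
    positivity
  have hdist := abs_sum_sub_le_tvDist (realDist nmExt X A) (idealDist nmExt X A) (agreeEvent B)
  rw [sum_realDist_agreeEvent, sum_idealDist_agreeEvent nmExt X hXne, ← sub_div] at hdist
  exact (le_abs_self _).trans (hdist.trans (hnm X hX A hA))

lemma two_mul_card_correlatedSeeds_le : 2 * #(correlatedSeeds nmExt X (1 / 2 + 2 * ε)) ≤ 2 ^ d := by
  set B := correlatedSeeds nmExt X (1 / 2 + 2 * ε)
  by_contra! hB
  obtain ⟨s₀, hs₀⟩ : B.Nonempty := by
    rw [← card_pos]
    lia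
  obtain ⟨t₀, ht₀, -⟩ := (mem_correlatedSeeds nmExt X).1 hs₀
  have : Nontrivial (Fin d → Bool) := nontrivial_of_ne _ _ ht₀
  obtain ⟨A, hA⟩ := exists_forall_ne_self_and_rel
    (fun s t => t ≠ s ∧ 1 / 2 + 2 * ε < agreement nmExt X s t) fun _ _ h => h.1
  have hAdv : Adversarial A := fun s => (hA s).1
  have hagree : ∀ s ∈ B, 1 / 2 + 2 * ε < agreement nmExt X s (A s) := fun s hs =>
    ((hA s).2 ((mem_correlatedSeeds nmExt X).1 hs)).2
  have hsum : #B * (1 / 2 + 2 * ε) < ∑ s ∈ B, agreement nmExt X s (A s) := by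
    simpa only [sum_const, nsmul_eq_mul] using sum_lt_sum_of_nonempty ⟨s₀, hs₀⟩ hagree
  have hdist := hnm.sum_agreement_sub_le hX hAdv B
  have hε : 0 ≤ ε := (tvDist_nonneg _ _).trans (hnm X hX A hAdv)
  have hB' : (2 : ℝ) ^ d < 2 * #B := by exact_mod_cast hB
  rw [div_le_iff₀ (by positivity)] at hdist
  nlinarith [mul_le_mul_of_nonneg_left hB'.le hε]

end IsNonMalleableExtractor

/-- If `nmExt` is a `(k,ε)`-non-malleable extractor and `x₁,…,x_K` (given by the
injective enumeration `x : Fin 2^k → {0,1}^n`) is any subset of `{0,1}^n` of size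
`K = 2^k`, with evaluation vectors `w⁽ˢ⁾ = (nmExt(xᵢ,s))ᵢ`, then there is a set `S`
of `2^{d−1}` seeds whose evaluation vectors are pairwise `(1/2 − 2ε)`-far in
relative Hamming distance. -/
theorem nmExt_good_seed_set (n k d : ℕ) (ε : ℝ)
    (nmExt : (Fin n → Bool) → (Fin d → Bool) → Bool)
    (x : Fin (2 ^ k) → (Fin n → Bool)) (hx : Function.Injective x)
    (hnm : IsNonMalleableExtractor n k d ε nmExt) :
    ∃ S : Finset (Fin d → Bool), S.card = 2 ^ (d - 1) ∧
      ∀ s ∈ S, ∀ s' ∈ S, s ≠ s' →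
        (hammingDist (fun i => nmExt (x i) s) (fun i => nmExt (x i) s') : ℝ) /
            ((2 : ℝ) ^ k) ≥ 1 / 2 - 2 * ε := by
  set X := univ.map ⟨x, hx⟩
  set B := correlatedSeeds nmExt X (1 / 2 + 2 * ε)
  have hB : 2 * #B ≤ 2 ^ d := hnm.two_mul_card_correlatedSeeds_le (by simp [X])
  have hBc : 2 ^ (d - 1) ≤ #Bᶜ := by
    rw [card_compl]
    simp only [Fintype.card_fun, Fintype.card_bool, Fintype.card_fin]
    rcases d with _ | d
    · omega
    · rw [pow_succ] at hB ⊢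
      rw [Nat.add_sub_cancel]
      omega
  obtain ⟨S, hSB, hS⟩ := exists_subset_card_eq hBc
  refine ⟨S, hS, fun s hs t _ hst => ?_⟩
  have hle : agreement nmExt X s t ≤ 1 / 2 + 2 * ε := by
    have hsB := mem_compl.1 (hSB hs)
    rw [mem_correlatedSeeds] at hsB
    push Not at hsB
    exact hsB t (Ne.symm hst)
  rw [agreement_map] at hle
  simp only [Function.Embedding.coeFn_mk, Fintype.card_fin, Nat.cast_pow, Nat.cast_ofNat] at hle
  linarith
end

section
/- Fix a constant c ∈ (0, 1/20) and let ε ∈ (0, c). Let n be an integer with n > c/ε², and let C ⊆ {0,1}^n be a code with relative distance at least 1/2 − ε (i.e., any two distinct codewords differ in at least a (1/2 − ε)-fraction of coordinates). Then |C| < 2^{(23/c)·ε²·log₂(1/ε)·n}. -/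
/-!
Delsarte's linear-programming bound, in Fourier form. For a weight `h ≥ 0` on sets of coordinates
with `∑ i, h ({i} ∆ W) ≥ μ h W` for all `W`, let `Φ_h(x, y) = ∑ S, h S χ_S(x) χ_S(y)` (`χ_S` the
Walsh characters). The function `(n - 2 d(x, y) - τ) Φ_h(x, y)²` has Fourier coefficients at least
`(μ - τ) (h ∗ h)`, so its sum over `C × C` is at least `(μ - τ) ‖h‖² |C|²`. For `τ = 2εn` every
off-diagonal term is nonpositive, so the sum is at most `|C| n (∑ h)²`.

With `h S = a ^ |S|` for `|S| ≤ r = ⌈10 ε² n⌉` and `a` chosen so that `μ = 3εn`, this gives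
`ε |C| ≤ V(r)²`, where `V(r)` is the number of sets of size at most `r`; since
`V(r) ε^{2r} ≤ (1 + ε²)ⁿ ≤ e^r`, we get `|C| ≤ ε^{-(6r+1)}`.
-/

open Finset
open scoped symmDiff

namespace RefinedMRRW

theorem prod_mul_prod_eq_prod_symmDiff {ι M : Type*} [DecidableEq ι] [CommMonoid M]
    {f : ι → M} (hf : ∀ i, f i * f i = 1) (s t : Finset ι) :
    (∏ i ∈ s, f i) * ∏ i ∈ t, f i = ∏ i ∈ s ∆ t, f i := by
  have hunion : ∏ i ∈ s ∪ t, f i = (∏ i ∈ s ∆ t, f i) * ∏ i ∈ s ∩ t, f i := by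
    rw [← sup_eq_union, ← inf_eq_inter, ← symmDiff_sup_inf s t]
    exact prod_union (disjoint_symmDiff_inf s t)
  have hinter : (∏ i ∈ s ∩ t, f i) * ∏ i ∈ s ∩ t, f i = 1 := by
    rw [← prod_mul_distrib]
    exact prod_eq_one fun i _ => hf i
  rw [← prod_union_inter, hunion, mul_assoc, hinter, mul_one]

theorem sum_singleton_symmDiff {ι M : Type*} [Fintype ι] [DecidableEq ι] [AddCommMonoid M]
    (f : Finset ι → M) (W : Finset ι) :
    ∑ i, f ({i} ∆ W) = ∑ i ∈ W, f (W.erase i) + ∑ i ∈ Wᶜ, f (insert i W) := by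
  rw [← sum_add_sum_compl W]
  congr 1 <;> refine Finset.sum_congr rfl fun i hi => congrArg f ?_
  · ext j
    by_cases j = i <;> simp_all [mem_symmDiff]
  · ext j
    rw [mem_compl] at hi
    by_cases j = i <;> simp_all [mem_symmDiff]

theorem pow_lt_two_rpow_mul_logb {x K : ℝ} {m : ℕ} (hx : 1 < x) (hm : (m : ℝ) < K) :
    x ^ m < (2 : ℝ) ^ (K * Real.logb 2 x) := by
  rw [mul_comm, Real.rpow_mul zero_le_two, Real.rpow_logb two_pos (by norm_num) (by positivity),
    ← Real.rpow_natCast]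
  exact Real.rpow_lt_rpow_of_exponent_lt hx hm

variable {ι : Type*}

noncomputable def walsh (S : Finset ι) (x : ι → Bool) : ℝ :=
  ∏ i ∈ S, if x i then -1 else 1

theorem walsh_mul_walsh [DecidableEq ι] (S T : Finset ι) (x : ι → Bool) :
    walsh S x * walsh T x = walsh (S ∆ T) x :=
  prod_mul_prod_eq_prod_symmDiff (fun i => by split_ifs <;> norm_num) S T

theorem walsh_mul_self [DecidableEq ι] (S : Finset ι) (x : ι → Bool) :
    walsh S x * walsh S x = 1 := by
  rw [walsh_mul_walsh, symmDiff_self, bot_eq_empty, walsh, prod_empty]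

section Fintype

variable [Fintype ι]

theorem sum_walsh_singleton_mul (x y : ι → Bool) :
    ∑ i, walsh {i} x * walsh {i} y = Fintype.card ι - 2 * hammingDist x y := by
  have hterm : ∀ i, walsh {i} x * walsh {i} y = 1 - 2 * if x i ≠ y i then 1 else 0 := by
    intro i
    simp only [walsh, prod_singleton]
    cases x i <;> cases y i <;> norm_num
  simp only [hterm, sum_sub_distrib, ← mul_sum, sum_boole, sum_const, card_univ,
    nsmul_eq_mul, mul_one, hammingDist]

noncomputable def walshKernel (k : Finset ι → ℝ) (x y : ι → Bool) : ℝ :=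
  ∑ S, k S * (walsh S x * walsh S y)

theorem sum_sum_walshKernel (C : Finset (ι → Bool)) (k : Finset ι → ℝ) :
    ∑ x ∈ C, ∑ y ∈ C, walshKernel k x y = ∑ U, k U * (∑ x ∈ C, walsh U x) ^ 2 := by
  simp only [walshKernel]
  rw [Finset.sum_congr rfl fun x _ => Finset.sum_comm, Finset.sum_comm]
  refine Finset.sum_congr rfl fun U _ => ?_
  rw [sq, sum_mul_sum, mul_sum]
  refine Finset.sum_congr rfl fun x _ => ?_
  rw [mul_sum]

noncomputable def levelOne (U : Finset ι) : ℝ := if #U = 1 then 1 else 0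

theorem sum_levelOne_mul (v : Finset ι → ℝ) : ∑ U, levelOne U * v U = ∑ i, v {i} := by
  simp only [levelOne, boole_mul]
  rw [← sum_filter, ← powerset_univ, ← powersetCard_eq_filter, powersetCard_one, sum_map]
  rfl

theorem walshKernel_levelOne (x y : ι → Bool) :
    walshKernel levelOne x y = Fintype.card ι - 2 * hammingDist x y := by
  rw [walshKernel, sum_levelOne_mul (fun U => walsh U x * walsh U y), sum_walsh_singleton_mul]

section DecidableEq

variable [DecidableEq ι]

noncomputable def conv (k w : Finset ι → ℝ) (U : Finset ι) : ℝ :=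
  ∑ S, k S * w (S ∆ U)

theorem walshKernel_mul (k w : Finset ι → ℝ) (x y : ι → Bool) :
    walshKernel k x y * walshKernel w x y = walshKernel (conv k w) x y := by
  rw [walshKernel, walshKernel, sum_mul_sum, walshKernel]
  simp only [conv, sum_mul]
  conv_rhs => rw [Finset.sum_comm]
  refine Finset.sum_congr rfl fun S _ => ?_
  refine Fintype.sum_bijective (S ∆ ·) (symmDiff_right_involutive S).bijective _ _ fun T => ?_
  rw [symmDiff_symmDiff_cancel_left, ← walsh_mul_walsh S T x, ← walsh_mul_walsh S T y]
  ring

theorem walshKernel_self (k : Finset ι → ℝ) (x : ι → Bool) :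
    walshKernel k x x = ∑ S, k S := by
  simp only [walshKernel, walsh_mul_self, mul_one]

theorem conv_levelOne (f : Finset ι → ℝ) (U : Finset ι) :
    conv levelOne f U = ∑ i, f ({i} ∆ U) :=
  sum_levelOne_mul (fun S => f (S ∆ U))

theorem conv_self_empty (h : Finset ι → ℝ) : conv h h ∅ = ∑ S, h S ^ 2 := by
  simp only [conv, ← bot_eq_empty, symmDiff_bot, sq]

theorem mul_conv_le_sum_conv {k h : Finset ι → ℝ} {μ : ℝ} (hk : ∀ S, 0 ≤ k S)
    (hh : ∀ W, μ * h W ≤ ∑ i, h ({i} ∆ W)) (U : Finset ι) :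
    μ * conv k h U ≤ ∑ i, conv k h ({i} ∆ U) :=
  calc μ * conv k h U = ∑ S, k S * (μ * h (S ∆ U)) := by
        rw [conv, mul_sum]
        exact Finset.sum_congr rfl fun S _ => by ring
    _ ≤ ∑ S, k S * ∑ i, h ({i} ∆ (S ∆ U)) :=
        sum_le_sum fun S _ => mul_le_mul_of_nonneg_left (hh _) (hk S)
    _ = ∑ i, conv k h ({i} ∆ U) := by
        simp only [conv, mul_sum, symmDiff_left_comm _ _ U]
        exact Finset.sum_comm

noncomputable def delsarteSum (C : Finset (ι → Bool)) (h : Finset ι → ℝ) (τ : ℝ) : ℝ :=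
  ∑ x ∈ C, ∑ y ∈ C, (Fintype.card ι - 2 * hammingDist x y - τ) * walshKernel h x y ^ 2

theorem delsarteSum_eq (C : Finset (ι → Bool)) (h : Finset ι → ℝ) (τ : ℝ) :
    delsarteSum C h τ =
      ∑ U, (conv levelOne (conv h h) U - τ * conv h h U) * (∑ x ∈ C, walsh U x) ^ 2 := by
  have hpoint : ∀ x y, (Fintype.card ι - 2 * hammingDist x y - τ) * walshKernel h x y ^ 2 =
      walshKernel (conv levelOne (conv h h)) x y - τ * walshKernel (conv h h) x y := by
    intro x y
    rw [sq, walshKernel_mul, ← walshKernel_levelOne, sub_mul, walshKernel_mul]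
  simp only [delsarteSum, hpoint, sum_sub_distrib, ← mul_sum, sum_sum_walshKernel]
  rw [mul_sum, ← sum_sub_distrib]
  exact Finset.sum_congr rfl fun U _ => by ring

theorem le_delsarteSum (C : Finset (ι → Bool)) {h : Finset ι → ℝ} {μ τ : ℝ}
    (h0 : ∀ S, 0 ≤ h S) (hμ : ∀ W, μ * h W ≤ ∑ i, h ({i} ∆ W)) (hτμ : τ ≤ μ) :
    (μ - τ) * (∑ S, h S ^ 2) * #C ^ 2 ≤ delsarteSum C h τ := by
  have hH : ∀ U, 0 ≤ conv h h U := fun U => sum_nonneg fun S _ => mul_nonneg (h0 S) (h0 _)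
  have hcoef : ∀ U, (μ - τ) * conv h h U ≤ conv levelOne (conv h h) U - τ * conv h h U := by
    intro U
    have := mul_conv_le_sum_conv h0 hμ U
    rw [conv_levelOne]
    linarith
  rw [delsarteSum_eq]
  calc (μ - τ) * (∑ S, h S ^ 2) * #C ^ 2
      = (μ - τ) * conv h h ∅ * (∑ x ∈ C, walsh ∅ x) ^ 2 := by
        simp [conv_self_empty, walsh]
    _ ≤ ∑ U, (μ - τ) * conv h h U * (∑ x ∈ C, walsh U x) ^ 2 :=
        single_le_sum (f := fun U => (μ - τ) * conv h h U * (∑ x ∈ C, walsh U x) ^ 2)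
          (fun U _ => mul_nonneg (mul_nonneg (sub_nonneg.2 hτμ) (hH U)) (sq_nonneg _))
          (mem_univ ∅)
    _ ≤ _ := sum_le_sum fun U _ => mul_le_mul_of_nonneg_right (hcoef U) (sq_nonneg _)

theorem delsarteSum_le (C : Finset (ι → Bool)) (h : Finset ι → ℝ) {τ : ℝ}
    (hC : ∀ x ∈ C, ∀ y ∈ C, x ≠ y → Fintype.card ι - 2 * (hammingDist x y : ℝ) ≤ τ) :
    delsarteSum C h τ ≤ #C * ((Fintype.card ι - τ) * (∑ S, h S) ^ 2) := by
  have hrow : ∀ x ∈ C, ∑ y ∈ C, (Fintype.card ι - 2 * hammingDist x y - τ) *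
      walshKernel h x y ^ 2 ≤ (Fintype.card ι - τ) * (∑ S, h S) ^ 2 := by
    intro x hx
    rw [← add_sum_erase C _ hx, hammingDist_self, Nat.cast_zero, mul_zero, sub_zero,
      walshKernel_self]
    refine add_le_of_nonpos_right (Finset.sum_nonpos fun y hy => ?_)
    have := hC x hx y (mem_of_mem_erase hy) (ne_of_mem_erase hy).symm
    exact mul_nonpos_of_nonpos_of_nonneg (by linarith) (sq_nonneg _)
  rw [delsarteSum]
  refine (sum_le_sum hrow).trans_eq ?_
  rw [sum_const, nsmul_eq_mul]

theorem delsarte_bound (C : Finset (ι → Bool)) {h : Finset ι → ℝ} {μ τ : ℝ}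
    (h0 : ∀ S, 0 ≤ h S) (hμ : ∀ W, μ * h W ≤ ∑ i, h ({i} ∆ W)) (hτμ : τ ≤ μ)
    (hτ : τ ≤ Fintype.card ι)
    (hC : ∀ x ∈ C, ∀ y ∈ C, x ≠ y → Fintype.card ι - 2 * (hammingDist x y : ℝ) ≤ τ) :
    (μ - τ) * (∑ S, h S ^ 2) * #C ≤ (Fintype.card ι - τ) * (∑ S, h S) ^ 2 := by
  rcases C.eq_empty_or_nonempty with rfl | hne
  · simpa using mul_nonneg (sub_nonneg.2 hτ) (sq_nonneg (∑ S, h S))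
  have hcard : (0 : ℝ) < #C := by exact_mod_cast hne.card_pos
  have := (le_delsarteSum C h0 hμ hτμ).trans (delsarteSum_le C h hC)
  refine le_of_mul_le_mul_right ?_ hcard
  linarith

end DecidableEq

end Fintype

noncomputable def truncGeom (r : ℕ) (a : ℝ) (S : Finset ι) : ℝ :=
  if #S ≤ r then a ^ #S else 0

theorem truncGeom_nonneg (r : ℕ) {a : ℝ} (ha : 0 ≤ a) (S : Finset ι) :
    0 ≤ truncGeom r a S := by
  unfold truncGeom
  split_ifs <;> positivity

section Fintype

variable [Fintype ι]

theorem one_le_sum_truncGeom_sq (r : ℕ) (a : ℝ) : 1 ≤ ∑ S : Finset ι, truncGeom r a S ^ 2 :=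
  calc (1 : ℝ) = truncGeom r a ∅ ^ 2 := by simp [truncGeom]
    _ ≤ _ := single_le_sum (f := fun S => truncGeom r a S ^ 2) (fun S _ => sq_nonneg _)
        (mem_univ ∅)

theorem sum_truncGeom_le_card (r : ℕ) {a : ℝ} (ha0 : 0 ≤ a) (ha1 : a ≤ 1) :
    ∑ S : Finset ι, truncGeom r a S ≤ #{S : Finset ι | #S ≤ r} := by
  rw [natCast_card_filter]
  refine sum_le_sum fun S _ => ?_
  unfold truncGeom
  split_ifs
  exacts [pow_le_one₀ ha0 ha1, le_rfl]

theorem mul_truncGeom_le_sum [DecidableEq ι] {r : ℕ} {a μ : ℝ} (hr : 0 < r) (ha : 0 ≤ a)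
    (hlow : μ ≤ (Fintype.card ι - r) * a) (hhigh : μ * a ≤ r) (W : Finset ι) :
    μ * truncGeom r a W ≤ ∑ i, truncGeom r a ({i} ∆ W) := by
  have h0 := truncGeom_nonneg (ι := ι) r ha
  rw [sum_singleton_symmDiff (truncGeom r a) W]
  rcases lt_trichotomy #W r with hlt | heq | hgt
  · have hinsert : ∑ i ∈ Wᶜ, truncGeom r a (insert i W) =
        (Fintype.card ι - #W) * a ^ (#W + 1) := by
      rw [Finset.sum_congr rfl fun i hi => by
        rw [truncGeom, card_insert_of_notMem (mem_compl.1 hi), if_pos (Nat.succ_le_of_lt hlt)]]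
      rw [sum_const, card_compl, nsmul_eq_mul, Nat.cast_sub (card_le_univ W)]
    have hW : (#W : ℝ) ≤ r := by exact_mod_cast hlt.le
    rw [truncGeom, if_pos hlt.le, hinsert]
    refine le_add_of_nonneg_of_le (sum_nonneg fun i _ => h0 _) ?_
    calc μ * a ^ #W ≤ (Fintype.card ι - r) * a * a ^ #W :=
          mul_le_mul_of_nonneg_right hlow (by positivity)
      _ ≤ (Fintype.card ι - #W) * a ^ (#W + 1) := by
          rw [pow_succ, mul_assoc, mul_comm a]
          exact mul_le_mul_of_nonneg_right (by linarith) (by positivity)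
  · have herase : ∑ i ∈ W, truncGeom r a (W.erase i) = r * a ^ (r - 1) := by
      rw [Finset.sum_congr rfl fun i hi => by
        rw [truncGeom, card_erase_of_mem hi, heq, if_pos (Nat.sub_le r 1)]]
      rw [sum_const, heq, nsmul_eq_mul]
    rw [truncGeom, if_pos heq.le, herase, heq]
    refine le_add_of_le_of_nonneg ?_ (sum_nonneg fun i _ => h0 _)
    calc μ * a ^ r = μ * a * a ^ (r - 1) := by
          rw [mul_assoc, ← pow_succ', Nat.sub_add_cancel hr]
      _ ≤ r * a ^ (r - 1) := mul_le_mul_of_nonneg_right hhigh (by positivity)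
  · rw [truncGeom, if_neg hgt.not_ge, mul_zero]
    exact add_nonneg (sum_nonneg fun i _ => h0 _) (sum_nonneg fun i _ => h0 _)

theorem card_filter_card_le_mul_pow_le (r : ℕ) {p : ℝ} (hp0 : 0 ≤ p) (hp1 : p ≤ 1) :
    (#{S : Finset ι | #S ≤ r} : ℝ) * p ^ r ≤ (1 + p) ^ Fintype.card ι := by
  rw [natCast_card_filter, sum_mul, add_comm, ← Fintype.sum_pow_mul_eq_add_pow]
  refine sum_le_sum fun S _ => ?_
  rw [one_pow, mul_one]
  split_ifs with hS
  · rw [one_mul]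
    exact pow_le_pow_of_le_one hp0 hp1 hS
  · rw [zero_mul]
    positivity

theorem card_filter_card_le_inv_pow {ε : ℝ} {r : ℕ} (hε0 : 0 < ε) (hε : ε ≤ 1 / 3)
    (hr : ε ^ 2 * Fintype.card ι ≤ r) :
    (#{S : Finset ι | #S ≤ r} : ℝ) ≤ (1 / ε) ^ (3 * r) := by
  have he : Real.exp 1 ≤ 1 / ε := by
    have := Real.exp_one_lt_d9
    rw [le_div_iff₀ hε0]
    nlinarith
  have hexp : (1 + ε ^ 2) ^ Fintype.card ι ≤ (1 / ε) ^ r :=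
    calc (1 + ε ^ 2) ^ Fintype.card ι ≤ Real.exp (ε ^ 2) ^ Fintype.card ι :=
          pow_le_pow_left₀ (by positivity) (by linarith [Real.add_one_le_exp (ε ^ 2)]) _
      _ ≤ Real.exp 1 ^ r := by
          rw [← Real.exp_nat_mul, Real.exp_one_pow, Real.exp_le_exp]
          linarith
      _ ≤ (1 / ε) ^ r := pow_le_pow_left₀ (Real.exp_pos 1).le he r
  have hball := (card_filter_card_le_mul_pow_le (ι := ι) r (p := ε ^ 2) (by positivity)
    (by nlinarith)).trans hexp
  calc (#{S : Finset ι | #S ≤ r} : ℝ)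
      = #{S : Finset ι | #S ≤ r} * (ε ^ 2) ^ r * (1 / ε) ^ (2 * r) := by
        rw [mul_assoc, pow_mul, ← mul_pow, div_pow, one_pow,
          mul_one_div_cancel (by positivity), one_pow, mul_one]
    _ ≤ (1 / ε) ^ r * (1 / ε) ^ (2 * r) :=
        mul_le_mul_of_nonneg_right hball (by positivity)
    _ = (1 / ε) ^ (3 * r) := by ring

theorem mul_card_le_card_filter_sq [DecidableEq ι] (C : Finset (ι → Bool)) {ε : ℝ} {r : ℕ}
    (hε : 0 < ε) (hr : 0 < r)
    (hr_sq : (3 * ε * Fintype.card ι) ^ 2 ≤ r * (Fintype.card ι - r))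
    (hr_lin : 3 * ε * Fintype.card ι ≤ Fintype.card ι - r)
    (hC : ∀ x ∈ C, ∀ y ∈ C, x ≠ y → (1 / 2 - ε) * Fintype.card ι ≤ hammingDist x y) :
    ε * #C ≤ (#{S : Finset ι | #S ≤ r} : ℝ) ^ 2 := by
  set n : ℝ := (Fintype.card ι : ℝ) with hn_def
  have hn : 0 < n := by
    have : (0 : ℝ) < r := Nat.cast_pos.2 hr
    have : 0 ≤ n := Nat.cast_nonneg _
    nlinarith
  have hnr : 0 < n - r := lt_of_lt_of_le (by positivity) hr_lin
  -- For `μ = 3εn` this makes `μ ≤ (n - r) a` an equality and turns `μ a ≤ r` into `hr_sq`.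
  set a := 3 * ε * n / (n - r)
  have ha0 : 0 ≤ a := by positivity
  have ha1 : a ≤ 1 := div_le_one_of_le₀ hr_lin hnr.le
  have hlow : 3 * ε * n ≤ (n - r) * a := by rw [mul_div_cancel₀ _ hnr.ne']
  have hhigh : 3 * ε * n * a ≤ r := by
    rw [← mul_div_assoc, div_le_iff₀ hnr, ← sq]
    exact hr_sq
  have hbound := delsarte_bound C (truncGeom_nonneg r ha0) (mul_truncGeom_le_sum hr ha0 hlow hhigh)
    (τ := 2 * ε * n) (by nlinarith) (by nlinarith) fun x hx y hy hxy => by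
      linarith [hC x hx y hy hxy]
  rw [← hn_def] at hbound
  have hsum := sum_truncGeom_le_card (ι := ι) r ha0 ha1
  have hsum0 : 0 ≤ ∑ S : Finset ι, truncGeom r a S := sum_nonneg fun S _ => truncGeom_nonneg r ha0 S
  refine le_of_mul_le_mul_right ?_ hn
  calc ε * #C * n = (3 * ε * n - 2 * ε * n) * 1 * #C := by ring
    _ ≤ (3 * ε * n - 2 * ε * n) * (∑ S, truncGeom r a S ^ 2) * #C :=
        mul_le_mul_of_nonneg_right
          (mul_le_mul_of_nonneg_left (one_le_sum_truncGeom_sq r a) (by nlinarith)) (by positivity)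
    _ ≤ (n - 2 * ε * n) * (∑ S, truncGeom r a S) ^ 2 := hbound
    _ ≤ n * (∑ S, truncGeom r a S) ^ 2 :=
        mul_le_mul_of_nonneg_right (by nlinarith) (sq_nonneg _)
    _ ≤ _ := by
        rw [mul_comm]
        exact mul_le_mul_of_nonneg_right (pow_le_pow_left₀ hsum0 hsum 2) hn.le

theorem card_le_inv_pow [DecidableEq ι] (C : Finset (ι → Bool)) {ε : ℝ}
    (hε0 : 0 < ε) (hε : ε < 1 / 20) (hn : 20 ≤ (Fintype.card ι : ℝ))
    (hC : ∀ x ∈ C, ∀ y ∈ C, x ≠ y → (1 / 2 - ε) * Fintype.card ι ≤ hammingDist x y) :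
    (#C : ℝ) ≤ (1 / ε) ^ (6 * ⌈10 * ε ^ 2 * (Fintype.card ι : ℝ)⌉₊ + 1) := by
  set n : ℝ := (Fintype.card ι : ℝ)
  set r := ⌈10 * ε ^ 2 * n⌉₊
  have hε2n : ε ^ 2 * n ≤ n / 400 := by
    have := mul_le_mul_of_nonneg_right (show ε ^ 2 ≤ 1 / 400 by nlinarith)
      (by linarith : (0 : ℝ) ≤ n)
    linarith
  have hr_ge : 10 * ε ^ 2 * n ≤ r := Nat.le_ceil _
  have hr_lt : (r : ℝ) < 10 * ε ^ 2 * n + 1 := Nat.ceil_lt_add_one (by positivity)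
  have hr_le : (r : ℝ) ≤ n / 10 := by linarith
  have hcode := mul_card_le_card_filter_sq C hε0 (r := r)
    (Nat.ceil_pos.2 (by positivity : (0 : ℝ) < 10 * ε ^ 2 * n)) (by nlinarith) (by nlinarith) hC
  have hball := card_filter_card_le_inv_pow (ι := ι) hε0 (by linarith)
    (by nlinarith : ε ^ 2 * n ≤ r)
  calc (#C : ℝ) = ε * #C * (1 / ε) := by field_simp
    _ ≤ ((1 / ε) ^ (3 * r)) ^ 2 * (1 / ε) := by
        gcongr
        exact hcode.trans (pow_le_pow_left₀ (by positivity) hball 2)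
    _ = (1 / ε) ^ (6 * r + 1) := by ring

end Fintype

end RefinedMRRW

open RefinedMRRW

/-- **Refined MRRW-type bound.** Fix `c ∈ (0, 1/20)` and `ε ∈ (0, c)`. For an integer
`n > c/ε²`, any code `C ⊆ {0,1}^n` whose distinct codewords pairwise differ in at
least a `(1/2 − ε)`-fraction of coordinates satisfies
`|C| < 2^{(23/c)·ε²·log₂(1/ε)·n}`. -/
theorem refined_MRRW_bound (c ε : ℝ) (hc0 : 0 < c) (hc : c < 1 / 20)
    (hε0 : 0 < ε) (hεc : ε < c)
    (n : ℕ) (hn : (n : ℝ) > c / ε ^ 2)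
    (C : Finset (Fin n → Bool))
    (hdist : ∀ x ∈ C, ∀ y ∈ C, x ≠ y →
      (hammingDist x y : ℝ) / (n : ℝ) ≥ 1 / 2 - ε) :
    (C.card : ℝ) < (2 : ℝ) ^ (23 / c * ε ^ 2 * Real.logb 2 (1 / ε) * (n : ℝ)) := by
  have hε : ε < 1 / 20 := hεc.trans hc
  have hεn : c < ε ^ 2 * n := by rwa [gt_iff_lt, div_lt_iff₀ (by positivity), mul_comm] at hn
  have hn20 : (20 : ℝ) < n := by nlinarith
  have hcard := card_le_inv_pow C hε0 hε (by simpa using hn20.le) fun x hx y hy hxy => by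
    simpa [le_div_iff₀ (by linarith : (0 : ℝ) < n)] using hdist x hx y hy hxy
  rw [Fintype.card_fin] at hcard
  set r := ⌈10 * ε ^ 2 * (n : ℝ)⌉₊
  have hexponent : ((6 * r + 1 : ℕ) : ℝ) < 23 / c * ε ^ 2 * n := by
    have hr_lt : (r : ℝ) < 10 * ε ^ 2 * n + 1 := Nat.ceil_lt_add_one (by positivity)
    have hM : 1 < ε ^ 2 * n / c := (one_lt_div hc0).2 hεn
    have hcM : ε ^ 2 * n = c * (ε ^ 2 * n / c) := by field_simp
    have := mul_lt_mul_of_pos_right hc (zero_lt_one.trans hM)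
    rw [show 23 / c * ε ^ 2 * n = 23 * (ε ^ 2 * n / c) by ring]
    push_cast
    linarith
  calc (C.card : ℝ) ≤ (1 / ε) ^ (6 * r + 1) := hcard
    _ < 2 ^ (23 / c * ε ^ 2 * n * Real.logb 2 (1 / ε)) :=
        pow_lt_two_rpow_mul_logb (by rw [lt_div_iff₀ hε0]; linarith) hexponent
    _ = _ := by ring_nf
end

section
/- Fix a constant c ∈ (0, 1/20), let ε ∈ (0, c), and let n be an integer with n > c/ε². Let r be an integer with 9ε²n/c ≤ r ≤ 10ε²n/c, and let B = {x ∈ {0,1}^n : the Hamming weight of x is r or r+1}. Then there exists a function f : {0,1}^n → ℝ, not identically zero, supported on B (f(x) = 0 for all x ∉ B), such that Σ_{x,y adjacent} f(x)·f(y) > 3εn · Σ_x f(x)², where the first sum ranges over ordered pairs (x,y) ∈ {0,1}^n × {0,1}^n that differ in exactly one coordinate. -/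
/-!
Take `f = √(n - r)` on the level `r` of the cube and `f = √(r + 1)` on the level `r + 1`.
A point of level `r` has `n - r` neighbours on level `r + 1`, and a point of level `r + 1` has
`r + 1` neighbours on level `r`, so `f · Af = √((n - r)(r + 1)) · f²` pointwise and the Rayleigh
quotient of `f` is `√((n - r)(r + 1))`. Since `r ≍ ε²n/c` and `r < n/2`, this exceeds `3εn`.
-/

open Finset Function

namespace Hypercube

variable {ι : Type*}

def weight [Fintype ι] (x : ι → Bool) : ℕ := (univ.filter fun i => x i = true).card

def flipAt [DecidableEq ι] (x : ι → Bool) (i : ι) : ι → Bool := update x i (!x i)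

lemma weight_le_card [Fintype ι] (x : ι → Bool) : weight x ≤ Fintype.card ι :=
  card_le_univ _

lemma card_filter_not_eq_true [Fintype ι] (x : ι → Bool) :
    (univ.filter fun i => ¬x i = true).card = Fintype.card ι - weight x := by
  have := card_filter_add_card_filter_not (s := (univ : Finset ι)) (p := fun i => x i = true)
  rw [card_univ] at this
  exact Nat.eq_sub_of_add_eq' this

lemma weight_flipAt_add_one_of_true [Fintype ι] [DecidableEq ι] {x : ι → Bool} {i : ι}
    (h : x i = true) :
    weight (flipAt x i) + 1 = weight x := by
  have : (univ.filter fun j => flipAt x i j = true) =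
      (univ.filter fun j => x j = true).erase i := by
    ext j
    rcases eq_or_ne j i with rfl | hj <;> simp [flipAt, update_of_ne, *]
  rw [weight, this, card_erase_add_one (by simp [h]), weight]

lemma weight_flipAt_of_false [Fintype ι] [DecidableEq ι] {x : ι → Bool} {i : ι}
    (h : x i = false) :
    weight (flipAt x i) = weight x + 1 := by
  have : (univ.filter fun j => flipAt x i j = true) =
      insert i (univ.filter fun j => x j = true) := by
    ext j
    rcases eq_or_ne j i with rfl | hj <;> simp [flipAt, update_of_ne, *]
  rw [weight, this, card_insert_of_notMem (by simp [h]), weight]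

lemma exists_weight_eq [Fintype ι] [DecidableEq ι] {r : ℕ} (hr : r ≤ Fintype.card ι) :
    ∃ x : ι → Bool, weight x = r := by
  obtain ⟨s, -, hs⟩ := exists_subset_card_eq (hr.trans_eq card_univ.symm)
  exact ⟨fun i => decide (i ∈ s), by simpa [weight] using hs⟩

lemma flipAt_injective [DecidableEq ι] (x : ι → Bool) : Injective (flipAt x) := by
  intro i j hij
  by_contra hne
  simpa [flipAt, update_of_ne hne] using congrFun hij i

lemma hammingDist_eq_one_iff [Fintype ι] [DecidableEq ι] {x y : ι → Bool} :
    hammingDist x y = 1 ↔ ∃ i, flipAt x i = y := by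
  rw [hammingDist, card_eq_one]
  refine exists_congr fun i => ⟨fun h => funext fun j => ?_, ?_⟩
  · have hj : x j ≠ y j ↔ j = i := by rw [← mem_singleton, ← h, mem_filter]; simp
    rcases eq_or_ne j i with rfl | hne
    · cases hx : x j <;> cases hy : y j <;> simp_all [flipAt]
    · simpa [flipAt, update_of_ne hne] using hj.not.2 hne
  · rintro rfl
    ext j
    rw [mem_filter, mem_singleton]
    rcases eq_or_ne j i with rfl | hj <;> simp [flipAt, update_of_ne, *]

lemma sum_hammingDist_eq_one [Fintype ι] [DecidableEq ι] {M : Type*} [AddCommMonoid M]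
    (x : ι → Bool) (F : (ι → Bool) → M) :
    (∑ y, if hammingDist x y = 1 then F y else 0) = ∑ i, F (flipAt x i) := by
  have : (univ.filter fun y => hammingDist x y = 1) = univ.map ⟨flipAt x, flipAt_injective x⟩ := by
    ext y
    simp [hammingDist_eq_one_iff]
  rw [← sum_filter, this, sum_map]
  rfl

lemma sum_sum_hammingDist_eq_one_mul [Fintype ι] [DecidableEq ι] {R : Type*}
    [NonUnitalNonAssocSemiring R] (f : (ι → Bool) → R) :
    (∑ x, ∑ y, if hammingDist x y = 1 then f x * f y else 0) = ∑ x, f x * ∑ i, f (flipAt x i) := by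
  refine sum_congr rfl fun x _ => ?_
  simp_rw [← sum_hammingDist_eq_one, mul_sum, mul_ite, mul_zero]

lemma sum_flipAt_comp_weight [Fintype ι] [DecidableEq ι] {M : Type*} [AddCommMonoid M]
    (x : ι → Bool) (φ : ℕ → M) :
    ∑ i, φ (weight (flipAt x i)) =
      weight x • φ (weight x - 1) + (Fintype.card ι - weight x) • φ (weight x + 1) := by
  rw [← sum_filter_add_sum_filter_not univ (fun i => x i = true)]
  have hdown : ∀ i ∈ univ.filter fun i => x i = true,
      φ (weight (flipAt x i)) = φ (weight x - 1) := fun i hi => by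
    rw [← weight_flipAt_add_one_of_true (mem_filter.1 hi).2, Nat.add_sub_cancel]
  have hup : ∀ i ∈ univ.filter fun i => ¬x i = true,
      φ (weight (flipAt x i)) = φ (weight x + 1) := fun i hi => by
    rw [weight_flipAt_of_false (by simpa using (mem_filter.1 hi).2)]
  rw [sum_congr rfl hdown, sum_congr rfl hup, sum_const, sum_const, card_filter_not_eq_true]
  rfl

def twoLevel (r : ℕ) (a b : ℝ) (k : ℕ) : ℝ := if k = r then a else if k = r + 1 then b else 0

-- For `r = 0` the truncated `r - 1` is `r` itself; the factor `r` still kills the term.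
lemma cast_mul_twoLevel_pred (r : ℕ) (a b : ℝ) : (r : ℝ) * twoLevel r a b (r - 1) = 0 := by
  rcases r with _ | k
  · simp
  · simp only [twoLevel, Nat.add_sub_cancel, if_neg (by omega : k ≠ k + 1),
      if_neg (by omega : k ≠ k + 1 + 1), mul_zero]

lemma twoLevel_mul_sum_flipAt [Fintype ι] [DecidableEq ι] {r : ℕ} {a b : ℝ}
    (ha : a ^ 2 = Fintype.card ι - r) (hb : b ^ 2 = r + 1) (x : ι → Bool) :
    twoLevel r a b (weight x) * ∑ i, twoLevel r a b (weight (flipAt x i)) =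
      a * b * twoLevel r a b (weight x) ^ 2 := by
  rw [sum_flipAt_comp_weight, nsmul_eq_mul, nsmul_eq_mul, Nat.cast_sub (weight_le_card x)]
  by_cases hr : weight x = r
  · rw [hr, cast_mul_twoLevel_pred]
    simp only [twoLevel, if_pos, if_neg (Nat.succ_ne_self r)]
    linear_combination (-(a * b)) * ha
  by_cases hr' : weight x = r + 1
  · rw [hr', Nat.add_sub_cancel]
    simp only [twoLevel, if_pos, if_neg (Nat.succ_ne_self r), if_neg (by omega : r + 1 + 1 ≠ r),
      if_neg (by omega : r + 1 + 1 ≠ r + 1)]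
    push_cast
    linear_combination (-(a * b)) * hb
  · simp [twoLevel, hr, hr']

end Hypercube

lemma two_mul_lt_of_le_ten_mul_sq_div {c ε : ℝ} {n r : ℕ} (hc0 : 0 < c) (hc : c < 1 / 20)
    (hε0 : 0 < ε) (hεc : ε < c) (hn : 0 < n) (hr : r ≤ 10 * ε ^ 2 * n / c) :
    2 * (r : ℝ) < n := by
  rw [le_div_iff₀ hc0] at hr
  have hn' : (0 : ℝ) < n := by exact_mod_cast hn
  have hε : ε ^ 2 * n < c ^ 2 * n := by gcongr
  nlinarith [mul_lt_mul_of_pos_right hc (mul_pos hc0 hn')]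

lemma sq_three_mul_lt_of_nine_mul_sq_div_le {c ε : ℝ} {n r : ℕ} (hc0 : 0 < c) (hc : c < 1 / 20)
    (hn : 0 < n) (hr : 9 * ε ^ 2 * n / c ≤ r) (h2r : 2 * (r : ℝ) < n) :
    (3 * ε * n) ^ 2 < (n - r) * (r + 1) := by
  rw [div_le_iff₀ hc0] at hr
  have hn' : (0 : ℝ) < n := by exact_mod_cast hn
  have : 9 * ε ^ 2 * n * n ≤ r * n / 20 := by
    nlinarith [mul_le_mul_of_nonneg_right hr hn'.le,
      mul_le_mul_of_nonneg_left hc.le (by positivity : (0 : ℝ) ≤ r * n)]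
  nlinarith

open Hypercube

/-- **Eigenvalue lower bound for Hamming levels `{r, r+1}`.** Fix `c ∈ (0, 1/20)`,
`ε ∈ (0, c)`, an integer `n > c/ε²`, and an integer `r` with
`9ε²n/c ≤ r ≤ 10ε²n/c`. Then there is a nonzero function `f : {0,1}^n → ℝ`
supported on `B = {x : weight(x) ∈ {r, r+1}}` with
`Σ_{x,y adjacent} f(x)f(y) > 3εn · Σ_x f(x)²`, the first sum ranging over ordered
pairs differing in exactly one coordinate. -/
theorem hamming_levels_eigenvalue_bound (c ε : ℝ) (hc0 : 0 < c) (hc : c < 1 / 20)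
    (hε0 : 0 < ε) (hεc : ε < c)
    (n : ℕ) (hn : (n : ℝ) > c / ε ^ 2)
    (r : ℕ) (hr1 : 9 * ε ^ 2 * (n : ℝ) / c ≤ (r : ℝ))
    (hr2 : (r : ℝ) ≤ 10 * ε ^ 2 * (n : ℝ) / c) :
    ∃ f : (Fin n → Bool) → ℝ, f ≠ 0 ∧
      (∀ x : Fin n → Bool,
        ((Finset.univ.filter fun i => x i = true).card ≠ r ∧
         (Finset.univ.filter fun i => x i = true).card ≠ r + 1) → f x = 0) ∧
      (∑ x : Fin n → Bool, ∑ y : Fin n → Bool,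
          if hammingDist x y = 1 then f x * f y else 0) >
        3 * ε * (n : ℝ) * ∑ x : Fin n → Bool, f x ^ 2 := by
  have hn0 : 0 < n := by exact_mod_cast (show 0 < c / ε ^ 2 by positivity).trans hn
  have h2r := two_mul_lt_of_le_ten_mul_sq_div hc0 hc hε0 hεc hn0 hr2
  set a := √(n - r : ℝ)
  set b := √(r + 1 : ℝ)
  have ha : a ^ 2 = Fintype.card (Fin n) - r := by
    rw [Fintype.card_fin]; exact Real.sq_sqrt (by linarith)
  have hb : b ^ 2 = r + 1 := Real.sq_sqrt (by positivity)
  have hab : 3 * ε * n < a * b := by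
    rw [← Real.sqrt_mul (by linarith)]
    exact Real.lt_sqrt_of_sq_lt (sq_three_mul_lt_of_nine_mul_sq_div_le hc0 hc hn0 hr1 h2r)
  obtain ⟨x₀, hx₀⟩ := exists_weight_eq (ι := Fin n) (r := r)
    (by rw [Fintype.card_fin]; exact_mod_cast (by linarith : (r : ℝ) ≤ n))
  have hfx₀ : twoLevel r a b (weight x₀) ≠ 0 := by
    rw [hx₀, twoLevel, if_pos rfl, Real.sqrt_ne_zero']
    linarith
  refine ⟨fun x => twoLevel r a b (weight x), fun h => hfx₀ (congrFun h x₀),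
    fun x hx => (if_neg hx.1).trans (if_neg hx.2), ?_⟩
  rw [sum_sum_hammingDist_eq_one_mul, sum_congr rfl fun x _ => twoLevel_mul_sum_flipAt ha hb x,
    ← mul_sum]
  exact mul_lt_mul_of_pos_right hab
    (sum_pos' (fun x _ => sq_nonneg _) ⟨x₀, mem_univ _, sq_pos_of_ne_zero hfx₀⟩)
end
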